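/- arXiv:1101.3696 — 3 statements merged into one kernel-verified Lean document; each statement's English description precedes it below -/
import Mathlib

section
/- Let k be a field of characteristic ≠ 2 with an involution σ (a ring automorphism with σ² = id). If A is a nonzero n×n matrix over k with A + A* = 0, where A* = σ(A)ᵗ (σ applied entrywise), then there exists an n×n matrix B with B + B* = 0 and trace(A·B) ≠ 0. -/
open Matrix

/-
For a nonzero entry `a = A i j`, the σ-skew-Hermitian matrix `B = a⁻¹ E_{ji} - σ(a⁻¹) E_{ij}` pairs
with `A` to `trace (A * B) = a⁻¹ a - σ(a⁻¹) A j i = 1 + σ(a⁻¹) σ(a) = 2`, which is nonzero away from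
characteristic 2. That `B` is skew needs `σ² (a⁻¹) = a⁻¹`; this holds because the skew condition,
read at `(i, j)` and at `(j, i)`, already forces the entries of `A` to be fixed by `σ²`.
-/

namespace Matrix

lemma apply_eq_neg_map_apply_of_add_map_transpose_eq_zero {ι R : Type*} [AddGroup R]
    (σ : R → R) {A : Matrix ι ι R}
    (hA : A + (A.map σ)ᵀ = 0) (i j : ι) : A j i = -σ (A i j) := by
  have h := congrFun₂ hA j i
  simp only [add_apply, transpose_apply, map_apply, zero_apply] at h
  exact eq_neg_of_add_eq_zero_left h

section AddCommGroup

variable {ι R F : Type*} [AddCommGroup R] [FunLike F R R] [AddMonoidHomClass F R R] (σ : F)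

lemma map_map_apply_of_add_map_transpose_eq_zero {A : Matrix ι ι R}
    (hA : A + (A.map σ)ᵀ = 0) (i j : ι) : σ (σ (A i j)) = A i j := by
  have h : σ (A i j) = -A j i := by
    rw [apply_eq_neg_map_apply_of_add_map_transpose_eq_zero σ hA i j, neg_neg]
  rw [h, map_neg, ← apply_eq_neg_map_apply_of_add_map_transpose_eq_zero σ hA j i]

lemma single_sub_single_add_map_transpose_eq_zero [DecidableEq ι] (i j : ι) {c : R}
    (hc : σ (σ c) = c) :
    single j i c - single i j (σ c) + ((single j i c - single i j (σ c)).map σ)ᵀ = 0 := by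
  rw [Matrix.map_sub _ (map_sub σ), map_single, map_single, hc, transpose_sub, transpose_single,
    transpose_single]
  abel

end AddCommGroup

lemma trace_mul_single_sub_single {ι R : Type*} [Fintype ι] [DecidableEq ι] [Ring R]
    (A : Matrix ι ι R) (i j : ι) (c d : R) :
    (A * (single j i c - single i j d)).trace = A i j * c - A j i * d := by
  simp only [mul_sub, trace_sub, trace_mul_single, MulOpposite.smul_eq_mul_unop,
    MulOpposite.unop_op]

lemma exists_add_map_transpose_eq_zero_and_trace_mul_eq_two {ι D F : Type*} [Fintype ι]
    [DecidableEq ι] [DivisionRing D] [FunLike F D D] [RingHomClass F D D] (σ : F)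
    {A : Matrix ι ι D} (hA₀ : A ≠ 0) (hA : A + (A.map σ)ᵀ = 0) :
    ∃ B : Matrix ι ι D, B + (B.map σ)ᵀ = 0 ∧ (A * B).trace = 2 := by
  obtain ⟨i, j, ha⟩ : ∃ i j, A i j ≠ 0 := by
    by_contra! h
    exact hA₀ (ext h)
  have hσa : σ (A i j) ≠ 0 := (map_ne_zero σ).mpr ha
  refine ⟨single j i (A i j)⁻¹ - single i j (σ (A i j)⁻¹),
    single_sub_single_add_map_transpose_eq_zero σ i j ?_, ?_⟩
  · rw [map_inv₀, map_inv₀, map_map_apply_of_add_map_transpose_eq_zero σ hA]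
  · rw [trace_mul_single_sub_single, apply_eq_neg_map_apply_of_add_map_transpose_eq_zero σ hA i j,
      map_inv₀, neg_mul, sub_neg_eq_add, mul_inv_cancel₀ ha, mul_inv_cancel₀ hσa,
      one_add_one_eq_two]

end Matrix

theorem trace_form_nondegenerate_on_skew_hermitian_general
    (k : Type*) [Field k] (hchar : ringChar k ≠ 2)
    (σ : k ≃+* k)
    (n : ℕ) (A : Matrix (Fin n) (Fin n) k) (hA : A ≠ 0)
    (hskew : A + (A.map σ)ᵀ = 0) :
    ∃ B : Matrix (Fin n) (Fin n) k, B + (B.map σ)ᵀ = 0 ∧ (A * B).trace ≠ 0 := by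
  obtain ⟨B, hB, htrace⟩ := exists_add_map_transpose_eq_zero_and_trace_mul_eq_two σ hA hskew
  exact ⟨B, hB, htrace ▸ Ring.two_ne_zero hchar⟩

theorem trace_form_nondegenerate_on_skew_hermitian
    (k : Type*) [Field k] (hchar : ringChar k ≠ 2)
    (σ : k ≃+* k) (hσ : ∀ x, σ (σ x) = x)
    (n : ℕ) (A : Matrix (Fin n) (Fin n) k) (hA : A ≠ 0)
    (hskew : A + (A.map σ)ᵀ = 0) :
    ∃ B : Matrix (Fin n) (Fin n) k, B + (B.map σ)ᵀ = 0 ∧ (A * B).trace ≠ 0 :=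
  trace_form_nondegenerate_on_skew_hermitian_general k hchar σ n A hA hskew
end

section
/- Let k be a field of characteristic ≠ 2 and J = [[0, Iₙ],[-Iₙ, 0]]. The trace form on the symplectic Lie algebra is non-degenerate: if A is a 2n×2n matrix over k with Aᵗ·J + J·A = 0 and trace(A·X) = 0 for every 2n×2n matrix X with Xᵗ·J + J·X = 0, then A = 0. -/
/-!
For a skew matrix `J` with `J * J = -1`, the map `Y ↦ Y + J Yᵀ J` sends every matrix into the
Lie algebra `{X | Xᵀ J + J X = 0}`, and for `A` in that Lie algebra
`trace (A * (J Yᵀ J)) = trace (A * Y)` because `A = J Aᵀ J`. Hence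
`trace (A * Y) = 2⁻¹ * trace (A * (Y + J Yᵀ J)) = 0` for every `Y`, and the trace form on all
matrices is nondegenerate.
-/

open Matrix

namespace Matrix

variable {R ι : Type*} [CommRing R] [Fintype ι] {J A : Matrix ι ι R}

theorem isSkewAdjoint_iff_transpose_mul_add_mul_eq_zero :
    J.IsSkewAdjoint A ↔ Aᵀ * J + J * A = 0 := by
  rw [Matrix.IsSkewAdjoint, Matrix.IsAdjointPair, mul_neg, add_eq_zero_iff_eq_neg]

variable [DecidableEq ι]

theorem mul_transpose_mul_eq_self_of_isSkewAdjoint (hJJ : J * J = -1)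
    (hA : J.IsSkewAdjoint A) : J * Aᵀ * J = A := by
  rw [Matrix.IsSkewAdjoint, Matrix.IsAdjointPair] at hA
  rw [mul_assoc, hA, ← mul_assoc, hJJ, neg_one_mul, neg_neg]

theorem trace_mul_mul_transpose_mul_of_isSkewAdjoint (hJJ : J * J = -1)
    (hA : J.IsSkewAdjoint A) (Y : Matrix ι ι R) :
    trace (A * (J * Yᵀ * J)) = trace (A * Y) :=
  calc trace (A * (J * Yᵀ * J))
      = trace (J * Aᵀ * (J * J) * Yᵀ * J) := by
        conv_lhs => rw [← mul_transpose_mul_eq_self_of_isSkewAdjoint hJJ hA]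
        noncomm_ring
    _ = -trace (J * (Aᵀ * Yᵀ * J)) := by
        rw [hJJ, ← trace_neg]; simp only [mul_neg, neg_mul, mul_one, mul_assoc]
    _ = -trace (Aᵀ * Yᵀ * (J * J)) := by
        rw [trace_mul_comm, ← mul_assoc]
    _ = trace (A * Y) := by
        rw [hJJ, mul_neg_one, trace_neg, neg_neg, ← transpose_mul, trace_transpose,
          trace_mul_comm]

theorem isSkewAdjoint_add_mul_transpose_mul (hJt : Jᵀ = -J) (hJJ : J * J = -1)
    (Y : Matrix ι ι R) : J.IsSkewAdjoint (Y + J * Yᵀ * J) := by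
  have h₁ : (J * Yᵀ * J)ᵀ * J = -(J * Y) := by
    rw [transpose_mul, transpose_mul, transpose_transpose, hJt,
      show -J * (Y * -J) * J = J * Y * (J * J) by noncomm_ring, hJJ, mul_neg_one]
  have h₂ : J * (J * Yᵀ * J) = -(Yᵀ * J) := by
    rw [show J * (J * Yᵀ * J) = J * J * (Yᵀ * J) by noncomm_ring, hJJ, neg_one_mul]
  rw [isSkewAdjoint_iff_transpose_mul_add_mul_eq_zero, transpose_add, add_mul, mul_add, h₁, h₂]
  abel

theorem eq_zero_of_isSkewAdjoint_of_trace_mul_eq_zero (h2 : IsLeftRegular (2 : R))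
    (hJt : Jᵀ = -J) (hJJ : J * J = -1) (hA : J.IsSkewAdjoint A)
    (h : ∀ X, J.IsSkewAdjoint X → trace (A * X) = 0) : A = 0 := by
  refine ext_iff_trace_mul_right.2 fun Y => h2 ?_
  have := h _ (isSkewAdjoint_add_mul_transpose_mul hJt hJJ Y)
  rw [mul_add, trace_add, trace_mul_mul_transpose_mul_of_isSkewAdjoint hJJ hA] at this
  simp only [zero_mul, trace_zero, mul_zero, two_mul, this]

theorem fromBlocks_zero_one_neg_one_zero_eq_neg_J (l : Type*) [DecidableEq l] :
    fromBlocks 0 1 (-1) 0 = -Matrix.J l R := by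
  rw [Matrix.J, fromBlocks_neg, neg_zero, neg_neg]

end Matrix

theorem trace_form_nondegenerate_on_symplectic_lie_algebra
    (k : Type*) [Field k] (hchar : ringChar k ≠ 2) (n : ℕ)
    (A : Matrix (Fin n ⊕ Fin n) (Fin n ⊕ Fin n) k)
    (hA : Aᵀ * Matrix.fromBlocks 0 1 (-1) 0 + Matrix.fromBlocks 0 1 (-1) 0 * A = 0)
    (h : ∀ X : Matrix (Fin n ⊕ Fin n) (Fin n ⊕ Fin n) k,
      Xᵀ * Matrix.fromBlocks 0 1 (-1) 0 + Matrix.fromBlocks 0 1 (-1) 0 * X = 0 →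
      (A * X).trace = 0) :
    A = 0 := by
  have hJ := fromBlocks_zero_one_neg_one_zero_eq_neg_J (R := k) (Fin n)
  refine eq_zero_of_isSkewAdjoint_of_trace_mul_eq_zero
    (IsRegular.of_ne_zero (Ring.two_ne_zero hchar)).left ?_ ?_
    (isSkewAdjoint_iff_transpose_mul_add_mul_eq_zero.2 hA)
    fun X hX => h X (isSkewAdjoint_iff_transpose_mul_add_mul_eq_zero.1 hX)
  · rw [hJ, transpose_neg, J_transpose]
  · rw [hJ, neg_mul_neg, J_squared]
end

section
/- Let G be a finite group, N ◁ G a normal subgroup, and ρ an irreducible complex representation of N with stabilizer T(ρ) = {g ∈ G : ρᵍ ≅ ρ}. If θ is an irreducible representation of T(ρ) whose restriction to N contains ρ, then Ind_{T(ρ)}^G θ is irreducible. -/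
/-!
Restricted to `N`, evaluation at `x ∈ G` intertwines `Ind θ` with the conjugate `(Res θ)ˣ`, and
`Res θ` is `ρ`-isotypic: `W` is spanned by the subspaces `θ t (f V)`, each an image of
`ρ^{t⁻¹} ≅ ρ`. So an irreducible `N`-subrepresentation of `Ind θ` is isomorphic to `ρˣ` for every
`x` in its support, and by the definition of `T` its support lies in a single coset `T x`. As
`Ind θ` is semisimple over `N`, every `G`-subrepresentation `P` is then stable under truncation
to `T`. If `P ≠ 0`, the values at `1` of its functions supported on `T` form a nonzero
subrepresentation of the irreducible `θ`, hence all of `W`; the `G`-translates of these functions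
span `Ind θ`.
-/

open Representation

/-- The carrier of the representation of `G` induced from a representation `θ`
of a subgroup `T` (realized as `θ`-equivariant functions `G → W`). -/
def indCarrier {G : Type*} [Group G] (T : Subgroup G) {W : Type*} [AddCommGroup W]
    [Module ℂ W] (θ : Representation ℂ T W) : Submodule ℂ (G → W) where
  carrier := {f | ∀ (t : T) (g : G), f (↑t * g) = θ t (f g)}
  add_mem' := by
    intro a b ha hb t g
    simp [ha t g, hb t g]
  zero_mem' := by intro t g; simp
  smul_mem' := by
    intro c a ha t g
    simp [ha t g]

/-- The representation of `G` induced from the representation `θ` of the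
subgroup `T`, with `G` acting by right translation. -/
def indRep {G : Type*} [Group G] (T : Subgroup G) {W : Type*} [AddCommGroup W]
    [Module ℂ W] (θ : Representation ℂ T W) :
    Representation ℂ G (indCarrier T θ) where
  toFun g :=
    { toFun := fun f => ⟨fun x => f.1 (x * g), fun t y => by
        have h := f.2 t (y * g)
        rwa [← mul_assoc] at h⟩
      map_add' := fun f₁ f₂ => by ext x; rfl
      map_smul' := fun c f => by ext x; rfl }
  map_one' := by
    apply LinearMap.ext
    intro f
    apply Subtype.ext
    funext x
    simp
  map_mul' := fun g₁ g₂ => by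
    apply LinearMap.ext
    intro f
    apply Subtype.ext
    funext x
    simp [mul_assoc]

namespace Subrepresentation

variable {k N V : Type*} [Field k] [AddCommGroup V] [Module k V] [Monoid N]
  {ν : Representation k N V}

def subtype (S : Subrepresentation ν) : IntertwiningMap S.toRepresentation ν :=
  ⟨S.toSubmodule.subtype, fun _ => rfl⟩

theorem isIrreducible_toRepresentation {S : Subrepresentation ν} (hS : IsAtom S) :
    IsIrreducible S.toRepresentation := by
  have hS₀ : S.toSubmodule ≠ ⊥ := fun h => hS.1 (toSubmodule_injective h)
  have : Nontrivial (Subrepresentation S.toRepresentation) := ⟨⊥, ⊤, fun h => by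
    obtain ⟨v, hv, hv₀⟩ := Submodule.exists_mem_ne_zero_of_ne_bot hS₀
    have : (⟨v, hv⟩ : S.toSubmodule) ∈ (⊤ : Submodule k S.toSubmodule) := Submodule.mem_top
    rw [show (⊤ : Submodule k S.toSubmodule) = ⊥ from congrArg toSubmodule h.symm,
      Submodule.mem_bot] at this
    exact hv₀ (congrArg Subtype.val this)⟩
  refine ⟨fun Q => ?_⟩
  let Q' : Subrepresentation ν := ⟨Q.toSubmodule.map S.toSubmodule.subtype, by
    rintro g _ ⟨w, hw, rfl⟩
    exact ⟨_, Q.apply_mem_toSubmodule g hw, rfl⟩⟩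
  have hQ : Q.toSubmodule = Q'.toSubmodule.comap S.toSubmodule.subtype :=
    (Submodule.comap_map_eq_of_injective S.toSubmodule.injective_subtype _).symm
  rcases hS.le_iff.mp (show Q' ≤ S from fun _ ⟨w, _, h⟩ => h ▸ w.2) with h | h
  · left
    apply toSubmodule_injective
    rw [hQ, h]
    exact (Submodule.comap_bot _).trans (Submodule.ker_subtype _)
  · right
    apply toSubmodule_injective
    rw [hQ, h]
    exact Submodule.comap_subtype_self _

theorem apply_mem_of_forall_isAtom [IsSemisimpleRepresentation ν] (φ : IntertwiningMap ν ν)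
    (hφ : ∀ S : Subrepresentation ν, IsAtom S → ∀ v ∈ S, φ v ∈ S)
    (P : Subrepresentation ν) {v : V} (hv : v ∈ P) : φ v ∈ P := by
  have := (isSemisimpleRepresentation_iff_isSemisimpleModule_asModule ν).mp ‹_›
  let e := subrepresentationSubmoduleOrderIso (ρ := ν)
  have hle : e P ≤ (e P).comap (IntertwiningMap.equivLinearMapAsModule ν ν φ) := by
    conv_lhs => rw [← IsSemisimpleModule.sSup_simples_le (e P)]
    refine sSup_le fun m ⟨hm, hmP⟩ w hw => hmP ?_
    exact hφ (e.symm m) ((e.symm.isAtom_iff m).mpr (isSimpleModule_iff_isAtom.mp hm)) w hw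
  exact hle hv

end Subrepresentation

namespace Representation

variable {k H N V W X : Type*} [Field k]
  [AddCommGroup V] [Module k V] [AddCommGroup W] [Module k W] [AddCommGroup X] [Module k X]

theorem IsIrreducible.comp_of_surjective [Monoid H] [Monoid N] {ρ : Representation k N V}
    [IsIrreducible ρ] {φ : H →* N} (hφ : Function.Surjective φ) : IsIrreducible (ρ.comp φ) :=
  (OrderIso.isSimpleOrder_iff (β := Subrepresentation ρ)
    { toFun P := ⟨P.toSubmodule, fun n v hv => by
        obtain ⟨h, rfl⟩ := hφ n
        exact P.apply_mem_toSubmodule h hv⟩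
      invFun P := ⟨P.toSubmodule, fun h _ hv => P.apply_mem_toSubmodule (φ h) hv⟩
      left_inv _ := rfl
      right_inv _ := rfl
      map_rel_iff' := Iff.rfl }).mpr ‹_›

section Maschke

variable [Group N] [Finite N] [NeZero (Nat.card N : k)]

theorem IntertwiningMap.exists_leftInverse_of_injective {σ : Representation k N X}
    {ω : Representation k N W} (c : IntertwiningMap σ ω) (hc : Function.Injective c) :
    ∃ p : IntertwiningMap ω σ, p.comp c = .id σ := by
  obtain ⟨p, hp⟩ := MonoidAlgebra.exists_leftInverse_of_injective
    (equivLinearMapAsModule σ ω c) (LinearMap.ker_eq_bot.mpr hc)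
  exact ⟨(equivLinearMapAsModule ω σ).symm p,
    IntertwiningMap.ext (LinearMap.ext fun x => LinearMap.congr_fun hp x)⟩

/-- `hω` says that `ω` is generated by images of `ρ`. -/
theorem nonempty_equiv_of_intertwiningMap_ne_zero
    {ρ : Representation k N V} {σ : Representation k N X} {ω : Representation k N W}
    [IsIrreducible ρ] [IsIrreducible σ]
    (hω : ∀ p : IntertwiningMap ω σ, p ≠ 0 → ∃ h : IntertwiningMap ρ ω, p.comp h ≠ 0)
    {c : IntertwiningMap σ ω} (hc : c ≠ 0) : Nonempty (Equiv ρ σ) := by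
  obtain ⟨p, hp⟩ := c.exists_leftInverse_of_injective
    ((IsIrreducible.injective_or_eq_zero c).resolve_right hc)
  have hp₀ : p ≠ 0 := by
    rintro rfl
    have := IsSimpleModule.nontrivial (MonoidAlgebra k N) σ.asModule
    obtain ⟨x, hx⟩ := exists_ne (0 : σ.asModule)
    exact hx (congrArg (· x) (congrArg DFunLike.coe hp)).symm
  obtain ⟨h, hh⟩ := hω p hp₀
  exact ⟨(p.comp h).ofBijective ((IsIrreducible.bijective_or_eq_zero _).resolve_right hh)⟩

end Maschke

section Conjugate

variable {G : Type*} [Group G] {N : Subgroup G} [N.Normal]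

/-- The conjugate representation `ρᵍ : n ↦ ρ (g n g⁻¹)`. -/
def conjugate (ρ : Representation k N V) (g : G) : Representation k N V :=
  ρ.comp (MulAut.conjNormal g).toMonoidHom

variable {ρ : Representation k N V} {σ : Representation k N W}

@[simp]
theorem conjugate_apply (g : G) (n : N) : ρ.conjugate g n = ρ (MulAut.conjNormal g n) := rfl

@[simp]
theorem conjugate_one : ρ.conjugate (1 : G) = ρ := by
  ext n : 1
  simp

theorem conjugate_conjugate (g h : G) : (ρ.conjugate g).conjugate h = ρ.conjugate (g * h) := by
  ext n : 1
  simp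

instance [IsIrreducible ρ] (g : G) : IsIrreducible (ρ.conjugate g) :=
  IsIrreducible.comp_of_surjective (MulEquiv.surjective _)

def IntertwiningMap.conjugate (f : IntertwiningMap ρ σ) (g : G) :
    IntertwiningMap (ρ.conjugate g) (σ.conjugate g) :=
  ⟨f.toLinearMap, fun _ => f.isIntertwining' _⟩

def Equiv.conjugate (e : Equiv ρ σ) (g : G) : Equiv (ρ.conjugate g) (σ.conjugate g) :=
  .mk e.toLinearEquiv fun _ => e.isIntertwining' _

end Conjugate

section Inertia

variable {G Y : Type*} [Group G] [AddCommGroup Y] [Module k Y] {N T : Subgroup G} [N.Normal]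
  (hNT : N ≤ T) {ρ : Representation k N V} {θ : Representation k T W}

theorem exists_intertwiningMap_comp_ne_zero [IsIrreducible θ]
    (hT : ∀ g ∈ T, Nonempty ((ρ.conjugate g).Equiv ρ))
    {f : IntertwiningMap ρ (θ.comp (Subgroup.inclusion hNT))} (hf : f ≠ 0)
    {r : W →ₗ[k] Y} (hr : r ≠ 0) :
    ∃ h : IntertwiningMap ρ (θ.comp (Subgroup.inclusion hNT)), r ∘ₗ h.toLinearMap ≠ 0 := by
  obtain ⟨t, ht⟩ : ∃ t : T, r ∘ₗ θ t ∘ₗ f.toLinearMap ≠ 0 := by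
    by_contra! h
    let U : Subrepresentation θ := ⟨⨅ t : T, LinearMap.ker (r ∘ₗ θ t), fun t' w hw => by
      simp only [Submodule.mem_iInf, LinearMap.mem_ker, LinearMap.comp_apply] at hw ⊢
      intro t
      rw [← Module.End.mul_apply, ← map_mul]
      exact hw _⟩
    have hfU (v : V) : f v ∈ U.toSubmodule := by
      simpa [U] using fun t => LinearMap.congr_fun (h t) v
    rcases IsSimpleOrder.eq_bot_or_eq_top U with hU | hU
    · refine hf (IntertwiningMap.ext (LinearMap.ext fun v => ?_))
      have hv := hfU v
      rw [hU] at hv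
      exact (Submodule.mem_bot k).mp hv
    · refine hr (LinearMap.ext fun w => ?_)
      have hw : w ∈ U.toSubmodule := hU ▸ Submodule.mem_top
      simpa [U] using (Submodule.mem_iInf _).mp hw 1
  obtain ⟨e⟩ := hT _ (inv_mem t.2)
  let θt : IntertwiningMap (conjugate (θ.comp (Subgroup.inclusion hNT)) (t : G)⁻¹)
      (θ.comp (Subgroup.inclusion hNT)) :=
    ⟨θ t, fun n => by
      ext w
      simp only [LinearMap.comp_apply, conjugate_apply, MonoidHom.comp_apply]
      rw [← Module.End.mul_apply, ← map_mul, ← Module.End.mul_apply, ← map_mul]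
      congr 2
      ext
      simp [mul_assoc]⟩
  refine ⟨θt.comp ((f.conjugate _).comp e.symm.toIntertwiningMap), fun h => ht ?_⟩
  ext v
  simpa [θt, IntertwiningMap.conjugate] using LinearMap.congr_fun h (e v)

theorem nonempty_equiv_conjugate_of_ne_zero [Finite N] [NeZero (Nat.card N : k)]
    [IsIrreducible ρ] [IsIrreducible θ] (hT : ∀ g ∈ T, Nonempty ((ρ.conjugate g).Equiv ρ))
    {f : IntertwiningMap ρ (θ.comp (Subgroup.inclusion hNT))} (hf : f ≠ 0) (g : G)
    {σ : Representation k N X} [IsIrreducible σ]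
    {c : IntertwiningMap σ (conjugate (θ.comp (Subgroup.inclusion hNT)) g)} (hc : c ≠ 0) :
    Nonempty ((ρ.conjugate g).Equiv σ) :=
  nonempty_equiv_of_intertwiningMap_ne_zero (fun p hp => by
    obtain ⟨h, hh⟩ := exists_intertwiningMap_comp_ne_zero hNT hT hf
      (r := p.toLinearMap) (fun h₀ => hp (IntertwiningMap.ext h₀))
    exact ⟨h.conjugate g, fun h₀ => hh (congrArg IntertwiningMap.toLinearMap h₀)⟩) hc

end Inertia

end Representation

section Induced

variable {G V W : Type*} [Group G] [AddCommGroup V] [Module ℂ V] [AddCommGroup W] [Module ℂ W]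
  {N T : Subgroup G} [N.Normal] (hNT : N ≤ T) {ρ : Representation ℂ N V}
  (θ : Representation ℂ T W)

@[simp]
theorem indRep_apply (g x : G) (F : indCarrier T θ) : (indRep T θ g F).1 x = F.1 (x * g) :=
  rfl

theorem indCarrier.apply_mul (F : indCarrier T θ) (t : T) (x : G) :
    F.1 (t * x) = θ t (F.1 x) :=
  F.2 t x

namespace indRep

def eval (x : G) :
    IntertwiningMap ((indRep T θ).comp N.subtype) (conjugate (θ.comp (Subgroup.inclusion hNT)) x)
    where
  toLinearMap := (LinearMap.proj x).comp (indCarrier T θ).subtype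
  isIntertwining' n := by
    ext F
    change F.1 (x * n) = θ ⟨x * n * x⁻¹, _⟩ (F.1 x)
    rw [← indCarrier.apply_mul]
    simp

open scoped Classical in
noncomputable def extendByZero : IntertwiningMap θ ((indRep T θ).comp T.subtype) where
  toFun w := ⟨fun x => if h : x ∈ T then θ ⟨x, h⟩ w else 0, fun t x => by
    by_cases hx : x ∈ T
    · simp only [dif_pos hx, dif_pos (mul_mem t.2 hx), ← Module.End.mul_apply, ← map_mul]
      rfl
    · simp [hx, T.mul_mem_cancel_left t.2]⟩
  map_add' w₁ w₂ := by
    ext x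
    by_cases hx : x ∈ T <;> simp [hx]
  map_smul' c w := by
    ext x
    by_cases hx : x ∈ T <;> simp [hx]
  isIntertwining' t := by
    ext w x
    by_cases hx : x ∈ T
    · simp only [LinearMap.coe_comp, LinearMap.coe_mk, AddHom.coe_mk, Function.comp_apply,
        MonoidHom.coe_comp, Subgroup.coe_subtype, indRep_apply, dif_pos hx, dif_pos (mul_mem hx t.2),
        ← Module.End.mul_apply, ← map_mul]
      rfl
    · simp [hx, T.mul_mem_cancel_right t.2]

theorem extendByZero_apply_of_mem (w : W) {x : G} (hx : x ∈ T) :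
    (extendByZero θ w).1 x = θ ⟨x, hx⟩ w :=
  dif_pos hx

theorem extendByZero_apply_of_notMem (w : W) {x : G} (hx : x ∉ T) :
    (extendByZero θ w).1 x = 0 :=
  dif_neg hx

theorem extendByZero_apply_one_of_mem (F : indCarrier T θ) {x : G} (hx : x ∈ T) :
    (extendByZero θ (F.1 1)).1 x = F.1 x := by
  simpa [extendByZero_apply_of_mem θ _ hx] using (indCarrier.apply_mul θ F ⟨x, hx⟩ 1).symm

/-- Truncation of the support to `T`: on `T` the function `F` is determined by `F 1`. -/
noncomputable def truncate :
    IntertwiningMap ((indRep T θ).comp N.subtype) ((indRep T θ).comp N.subtype) where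
  toLinearMap := (extendByZero θ).toLinearMap ∘ₗ (LinearMap.proj 1).comp (indCarrier T θ).subtype
  isIntertwining' n := by
    ext F : 1
    have h := (extendByZero θ).isIntertwining (g := ⟨n, hNT n.2⟩) (v := F.1 1)
    have hF : F.1 n = θ ⟨n, hNT n.2⟩ (F.1 1) := by
      simpa using indCarrier.apply_mul θ F ⟨n, hNT n.2⟩ 1
    simp only [LinearMap.comp_apply, MonoidHom.comp_apply]
    simpa [hF] using h

theorem card_smul_eq_sum_extendByZero [Fintype G] (F : indCarrier T θ) :
    (Nat.card T : ℂ) • F = ∑ g : G, indRep T θ g⁻¹ (extendByZero θ (F.1 g)) := by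
  classical
  ext x
  have hterm (g : G) : (indRep T θ g⁻¹ (extendByZero θ (F.1 g))).1 x =
      if x * g⁻¹ ∈ T then F.1 x else 0 := by
    rw [indRep_apply]
    split_ifs with h
    · rw [extendByZero_apply_of_mem θ _ h, ← indCarrier.apply_mul]
      simp
    · exact extendByZero_apply_of_notMem θ _ h
  simp only [Submodule.coe_sum, Finset.sum_apply, hterm]
  rw [Fintype.sum_equiv ((Equiv.inv G).trans (Equiv.mulLeft x))
    (fun g => if x * g⁻¹ ∈ T then F.1 x else 0) (fun y => if y ∈ T then F.1 x else 0) fun g => rfl,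
    Finset.sum_ite, Finset.sum_const_zero, add_zero, Finset.sum_const, Nat.card_eq_fintype_card,
    Fintype.card_subtype, Submodule.coe_smul, Pi.smul_apply, Nat.cast_smul_eq_nsmul]

theorem eq_top_of_forall_extendByZero_mem [Finite G] {P : Subrepresentation (indRep T θ)}
    (hP : ∀ w, extendByZero θ w ∈ P) : P = ⊤ := by
  have := Fintype.ofFinite G
  refine Subrepresentation.toSubmodule_injective (eq_top_iff.mpr fun F _ => ?_)
  have hcard : (Nat.card T : ℂ) ≠ 0 := Nat.cast_ne_zero.mpr Nat.card_pos.ne'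
  rw [← inv_smul_smul₀ hcard F, card_smul_eq_sum_extendByZero]
  exact P.toSubmodule.smul_mem _
    (P.toSubmodule.sum_mem fun g _ => P.apply_mem_toSubmodule _ (hP _))

section Irreducible

variable [Finite G] [IsIrreducible ρ] [IsIrreducible θ]
  (hT : ∀ g, g ∈ T ↔ Nonempty ((ρ.conjugate g).Equiv ρ))
  {f : IntertwiningMap ρ (θ.comp (Subgroup.inclusion hNT))} (hf : f ≠ 0)
include hT hf

theorem mul_inv_mem_of_mem_isAtom {S : Subrepresentation ((indRep T θ).comp N.subtype)}
    (hS : IsAtom S) {F₁ F₂ : indCarrier T θ} (h₁ : F₁ ∈ S) (h₂ : F₂ ∈ S) {x y : G}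
    (hx : F₁.1 x ≠ 0) (hy : F₂.1 y ≠ 0) : x * y⁻¹ ∈ T := by
  have := Subrepresentation.isIrreducible_toRepresentation hS
  have equiv_of_ne_zero {F} (hF : F ∈ S) {x} (hx : F.1 x ≠ 0) :
      Nonempty ((ρ.conjugate x).Equiv S.toRepresentation) := by
    refine nonempty_equiv_conjugate_of_ne_zero hNT (fun g => (hT g).mp) hf x
      (X := S.toSubmodule) (c := (eval hNT θ x).comp S.subtype) fun h => hx ?_
    exact DFunLike.congr_fun h ⟨F, hF⟩
  obtain ⟨e₁⟩ := equiv_of_ne_zero h₁ hx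
  obtain ⟨e₂⟩ := equiv_of_ne_zero h₂ hy
  have e := (e₁.trans e₂.symm).conjugate y⁻¹
  rw [conjugate_conjugate, conjugate_conjugate, mul_inv_cancel, conjugate_one] at e
  exact (hT _).mpr ⟨e⟩

theorem truncate_mem_of_isAtom {S : Subrepresentation ((indRep T θ).comp N.subtype)}
    (hS : IsAtom S) {F : indCarrier T θ} (hF : F ∈ S) : truncate hNT θ F ∈ S := by
  by_cases hST : ∃ F' ∈ S, ∃ y ∈ T, F'.1 y ≠ 0
  · obtain ⟨F', hF', y, hy, hF'y⟩ := hST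
    convert hF
    ext x
    by_cases hx : x ∈ T
    · exact extendByZero_apply_one_of_mem θ F hx
    · refine (extendByZero_apply_of_notMem θ _ hx).trans (by_contra fun hFx => hx ?_)
      simpa using mul_mem (mul_inv_mem_of_mem_isAtom hNT θ hT hf hS hF hF' (Ne.symm hFx) hF'y) hy
  · push Not at hST
    have h₀ : truncate hNT θ F = 0 := by
      ext x
      by_cases hx : x ∈ T
      · exact (extendByZero_apply_one_of_mem θ F hx).trans (hST F hF x hx)
      · exact extendByZero_apply_of_notMem θ _ hx
    rw [h₀]
    exact S.toSubmodule.zero_mem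

theorem extendByZero_apply_one_mem {P : Subrepresentation (indRep T θ)} {F : indCarrier T θ}
    (hF : F ∈ P) : extendByZero θ (F.1 1) ∈ P :=
  Subrepresentation.apply_mem_of_forall_isAtom (truncate hNT θ)
    (fun _ hS _ hF => truncate_mem_of_isAtom hNT θ hT hf hS hF)
    ⟨P.toSubmodule, fun n => P.apply_mem_toSubmodule n⟩ hF

theorem extendByZero_mem {P : Subrepresentation (indRep T θ)} (hP : P ≠ ⊥) (w : W) :
    extendByZero θ w ∈ P := by
  obtain ⟨F, hF, hF₀⟩ := Submodule.exists_mem_ne_zero_of_ne_bot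
    fun h => hP (Subrepresentation.toSubmodule_injective h)
  obtain ⟨x, hx⟩ : ∃ x, F.1 x ≠ 0 := by
    by_contra! h
    exact hF₀ (Subtype.ext (funext h))
  let U : Subrepresentation θ := ⟨P.toSubmodule.comap (extendByZero θ).toLinearMap, fun t w hw => by
    simp only [Submodule.mem_comap, IntertwiningMap.coe_toLinearMap] at hw ⊢
    rw [IntertwiningMap.isIntertwining]
    exact P.apply_mem_toSubmodule t hw⟩
  have hxU : F.1 x ∈ U.toSubmodule := by
    show extendByZero θ (F.1 x) ∈ P
    simpa using extendByZero_apply_one_mem hNT θ hT hf (P.apply_mem_toSubmodule x hF)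
  rcases IsSimpleOrder.eq_bot_or_eq_top U with hU | hU
  · rw [hU] at hxU
    exact absurd ((Submodule.mem_bot ℂ).mp hxU) hx
  · have hw : w ∈ U.toSubmodule := hU ▸ Submodule.mem_top
    exact hw

theorem isIrreducible : IsIrreducible (indRep T θ) := by
  have : Nontrivial W := IsSimpleModule.nontrivial (MonoidAlgebra ℂ T) θ.asModule
  obtain ⟨w, hw⟩ := exists_ne (0 : W)
  have : Nontrivial (Subrepresentation (indRep T θ)) := ⟨⊥, ⊤, fun h => hw <| by
    have h₁ : extendByZero θ w ∈ (⊥ : Subrepresentation (indRep T θ)) := h ▸ Submodule.mem_top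
    have h₂ : (extendByZero θ w).1 1 = 0 := by
      rw [(Submodule.mem_bot ℂ).mp h₁]
      rfl
    rwa [extendByZero_apply_of_mem θ w T.one_mem, show (⟨1, T.one_mem⟩ : T) = 1 from rfl, map_one,
      Module.End.one_apply] at h₂⟩
  exact ⟨fun P => or_iff_not_imp_left.mpr fun hP =>
    eq_top_of_forall_extendByZero_mem θ (extendByZero_mem hNT θ hT hf hP)⟩

end Irreducible

end indRep

end Induced

theorem induced_from_inertia_group_irreducible
    {G : Type*} [Group G] [Fintype G] (N : Subgroup G) [hN : N.Normal]
    {V : Type*} [AddCommGroup V] [Module ℂ V]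
    (ρ : Representation ℂ N V)
    (hρ : IsSimpleModule (MonoidAlgebra ℂ N) ρ.asModule)
    (T : Subgroup G) (hNT : N ≤ T)
    (hT : ∀ g : G, g ∈ T ↔ ∃ e : V ≃ₗ[ℂ] V, ∀ n : N,
      e.toLinearMap ∘ₗ ρ ⟨g * ↑n * g⁻¹, hN.conj_mem ↑n n.2 g⟩ = ρ n ∘ₗ e.toLinearMap)
    {W : Type*} [AddCommGroup W] [Module ℂ W]
    (θ : Representation ℂ T W)
    (hθ : IsSimpleModule (MonoidAlgebra ℂ T) θ.asModule)
    (f : V →ₗ[ℂ] W) (hf : f ≠ 0)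
    (hfequiv : ∀ n : N, f ∘ₗ ρ n = θ ⟨↑n, hNT n.2⟩ ∘ₗ f) :
    IsSimpleModule (MonoidAlgebra ℂ G) (indRep T θ).asModule := by
  have := (irreducible_iff_isSimpleModule_asModule ρ).mpr hρ
  have := (irreducible_iff_isSimpleModule_asModule θ).mpr hθ
  have hT' (g : G) : g ∈ T ↔ Nonempty ((ρ.conjugate g).Equiv ρ) :=
    (hT g).trans ⟨fun ⟨e, he⟩ => ⟨.mk e he⟩, fun ⟨e⟩ => ⟨e.toLinearEquiv, e.isIntertwining'⟩⟩
  refine (irreducible_iff_isSimpleModule_asModule _).mp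
    (indRep.isIrreducible hNT θ hT' (f := ⟨f, hfequiv⟩) fun h => hf ?_)
  exact congrArg IntertwiningMap.toLinearMap h
end
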